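/- arXiv:1802.05359 — 3 statements merged into one kernel-verified Lean document; each statement's English description precedes it below -/
import Mathlib

section
/- Let F be a perfect field, A an m × m non-derogatory matrix over F (its minimal polynomial equals its characteristic polynomial c_A(x)), and B an n × n matrix over F with invariant factors t₁(x), …, t_n(x) of xI − B. Then the nullity of Iₙ ⊗ A − Bᵀ ⊗ Iₘ equals ∑_{j=1}^{n} deg(gcd(c_A(x), t_j(x))). -/
open Matrix Kronecker Polynomial Classical
noncomputable section

open Module LinearMap

/-!
Make `F^m` an `F[X]`-module by letting `X` act as `A`. Under `Fin n × Fin m → F ≃ Fin n → F^m`,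
the matrix `Iₙ ⊗ A − Bᵀ ⊗ Iₘ` becomes the right action of the polynomial matrix `xI − B` on
`n`-tuples. This action is anti-multiplicative, so the unimodular `U`, `V` act by automorphisms
and the nullity equals that of `diag(t₁, …, tₙ)`, namely `∑ j, dim ker t_j(A)`. Finally
`ker t(A) = ker gcd(c_A, t)(A)`, and since `A` is non-derogatory, `dim ker g(A) = deg g` for every
divisor `g` of `c_A`: `range h(A) ⊆ ker g(A)` when `g h = c_A`, and conversely
`dim ker g(A) ≤ deg g`.
-/

theorem LinearMap.finrank_ker_eq_of_comp_eq {R M M' N N' : Type*} [Ring R] [AddCommGroup M]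
    [AddCommGroup M'] [AddCommGroup N] [AddCommGroup N'] [Module R M] [Module R M'] [Module R N]
    [Module R N'] {g : M →ₗ[R] M'} {h : N →ₗ[R] N'} (e₁ : M' ≃ₗ[R] N') (e₂ : M ≃ₗ[R] N)
    (H : e₁.toLinearMap ∘ₗ g = h ∘ₗ e₂) : finrank R (ker g) = finrank R (ker h) := by
  have : ker g = (ker h).comap e₂.toLinearMap := by
    rw [← LinearEquiv.ker_comp e₁ g, H, ker_comp]
  rw [this, Submodule.comap_equiv_eq_map_symm, LinearEquiv.finrank_map_eq]

def LinearMap.kerPiMapEquiv {R ι : Type*} [Ring R] {φ ψ : ι → Type*} [∀ i, AddCommGroup (φ i)]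
    [∀ i, AddCommGroup (ψ i)] [∀ i, Module R (φ i)] [∀ i, Module R (ψ i)]
    (f : ∀ i, φ i →ₗ[R] ψ i) : ker (piMap f) ≃ₗ[R] ∀ i, ker (f i) where
  toFun v i := ⟨v.1 i, congr_fun v.2 i⟩
  invFun w := ⟨fun i => w i, funext fun i => (w i).2⟩
  map_add' _ _ := rfl
  map_smul' _ _ := rfl

theorem LinearMap.finrank_ker_piMap {K ι : Type*} [Field K] [Fintype ι] {φ ψ : ι → Type*}
    [∀ i, AddCommGroup (φ i)] [∀ i, AddCommGroup (ψ i)] [∀ i, Module K (φ i)]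
    [∀ i, Module K (ψ i)] [∀ i, FiniteDimensional K (φ i)] (f : ∀ i, φ i →ₗ[K] ψ i) :
    finrank K (ker (piMap f)) = ∑ i, finrank K (ker (f i)) := by
  rw [(kerPiMapEquiv f).finrank_eq, finrank_pi_fintype]

namespace Module.End

section CommRing

variable {R V : Type*} [CommRing R] [AddCommGroup V] [Module R V]

theorem aeval_restrict_apply (f : End R V) {p : Submodule R V} (h : ∀ x ∈ p, f x ∈ p)
    (q : R[X]) (x : p) : (aeval (f.restrict h) q x : V) = aeval f q x := by
  induction q using Polynomial.induction_on' with
  | add q r hq hr => simp [hq, hr]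
  | monomial k a => simp [aeval_monomial, pow_restrict k h]

theorem apply_mem_range_aeval (f : End R V) (q : R[X]) {x : V}
    (hx : x ∈ range (aeval f q)) : f x ∈ range (aeval f q) := by
  obtain ⟨v, rfl⟩ := hx
  have hcomm : aeval f q * f = f * aeval f q := by
    simpa only [map_mul, aeval_X] using congr(aeval f $(mul_comm q X))
  exact ⟨f v, congr($hcomm v)⟩

theorem ker_aeval_le_of_dvd (f : End R V) {p q : R[X]} (h : p ∣ q) :
    ker (aeval f p) ≤ ker (aeval f q) := by
  obtain ⟨r, rfl⟩ := h
  intro v hv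
  simp_all [mem_ker, mul_comm p r, mul_apply]

end CommRing

section Field

variable {K V : Type*} [Field K] [AddCommGroup V] [Module K V]

theorem ker_aeval_gcd (f : End K V) {q : K[X]} (hq : aeval f q = 0) (p : K[X]) :
    ker (aeval f (EuclideanDomain.gcd q p)) = ker (aeval f p) := by
  refine le_antisymm (ker_aeval_le_of_dvd f (EuclideanDomain.gcd_dvd_right q p)) fun v hv => ?_
  rw [mem_ker] at hv ⊢
  rw [EuclideanDomain.gcd_eq_gcd_ab, mul_comm q, mul_comm p]
  simp [mul_apply, hq, hv]

variable [FiniteDimensional K V]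

/-- If `μ` is the minimal polynomial of `f` on `range g(f)`, then `μ * g` annihilates `f`, so
`dim V = deg μ_f ≤ dim range g(f) + deg g`. -/
theorem finrank_ker_aeval_le (f : End K V) (hf : minpoly K f = f.charpoly) {g : K[X]}
    (hg : g ≠ 0) : finrank K (ker (aeval f g)) ≤ g.natDegree := by
  have hW : ∀ x ∈ range (aeval f g), f x ∈ range (aeval f g) := fun _ =>
    apply_mem_range_aeval f g
  set μ := minpoly K (f.restrict hW)
  have hμ0 : μ ≠ 0 := minpoly.ne_zero (Algebra.IsIntegral.isIntegral _)
  have hμ : μ.natDegree ≤ finrank K (range (aeval f g)) := by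
    simpa [charpoly_natDegree] using natDegree_le_of_dvd
      (LinearMap.minpoly_dvd_charpoly (f.restrict hW)) (LinearMap.charpoly_monic _).ne_zero
  have hkill : aeval f (μ * g) = 0 := by
    ext v
    rw [map_mul, mul_apply, ← aeval_restrict_apply f hW μ ⟨_, mem_range_self _ v⟩]
    simp [μ, minpoly.aeval]
  have hdeg : finrank K V ≤ μ.natDegree + g.natDegree := by
    rw [← natDegree_mul hμ0 hg, ← charpoly_natDegree f, ← hf]
    exact natDegree_le_of_dvd (minpoly.dvd K f hkill) (mul_ne_zero hμ0 hg)
  have := finrank_range_add_finrank_ker (aeval f g)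
  omega

theorem finrank_ker_aeval_of_dvd (f : End K V) (hf : minpoly K f = f.charpoly) {g : K[X]}
    (hg : g ∣ minpoly K f) : finrank K (ker (aeval f g)) = g.natDegree := by
  obtain ⟨h, hgh⟩ := hg
  have hμ0 : minpoly K f ≠ 0 := minpoly.ne_zero (Algebra.IsIntegral.isIntegral f)
  have hg0 : g ≠ 0 := left_ne_zero_of_mul (hgh ▸ hμ0)
  have hh0 : h ≠ 0 := right_ne_zero_of_mul (hgh ▸ hμ0)
  have hdeg : g.natDegree + h.natDegree = finrank K V := by
    rw [← natDegree_mul hg0 hh0, ← hgh, hf, charpoly_natDegree]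
  have hrange : range (aeval f h) ≤ ker (aeval f g) := by
    rintro _ ⟨v, rfl⟩
    rw [mem_ker, ← mul_apply, ← map_mul, ← hgh, minpoly.aeval, LinearMap.zero_apply]
  have := Submodule.finrank_mono hrange
  have := finrank_range_add_finrank_ker (aeval f h)
  have := finrank_ker_aeval_le f hf hg0
  have := finrank_ker_aeval_le f hf hh0
  omega

end Field

section PolyMatrixAct

variable {R V ι : Type*} [CommRing R] [AddCommGroup V] [Module R V] [Fintype ι]

/-- Polynomial matrices act on `ι → V` from the right, with `X` acting on `V` as `f`. -/
def polyMatrixAct (f : End R V) (P : Matrix ι ι R[X]) : (ι → V) →ₗ[R] (ι → V) :=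
  LinearMap.pi fun j => ∑ i, aeval f (P i j) ∘ₗ LinearMap.proj i

@[simp]
theorem polyMatrixAct_apply (f : End R V) (P : Matrix ι ι R[X]) (v : ι → V) (j : ι) :
    polyMatrixAct f P v j = ∑ i, aeval f (P i j) (v i) := by
  simp [polyMatrixAct]

theorem polyMatrixAct_one [DecidableEq ι] (f : End R V) :
    polyMatrixAct f (1 : Matrix ι ι R[X]) = LinearMap.id := by
  refine LinearMap.ext fun v => funext fun j => ?_
  simp [Matrix.one_apply, apply_ite (aeval f), apply_ite (DFunLike.coe : End R V → V → V),
    ite_apply]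

theorem polyMatrixAct_mul (f : End R V) (P Q : Matrix ι ι R[X]) :
    polyMatrixAct f (P * Q) = polyMatrixAct f Q ∘ₗ polyMatrixAct f P := by
  refine LinearMap.ext fun v => funext fun j => ?_
  simp only [polyMatrixAct_apply, Matrix.mul_apply, map_sum, LinearMap.coe_comp,
    Function.comp_apply, LinearMap.coe_sum, Finset.sum_apply]
  rw [Finset.sum_comm]
  simp [mul_comm (P _ _), Module.End.mul_apply]

theorem polyMatrixAct_diagonal [DecidableEq ι] (f : End R V) (t : ι → R[X]) :
    polyMatrixAct f (diagonal t) = LinearMap.piMap fun j => aeval f (t j) := by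
  refine LinearMap.ext fun v => funext fun j => ?_
  simp [diagonal_apply, apply_ite (aeval f), apply_ite (DFunLike.coe : End R V → V → V),
    ite_apply]

theorem polyMatrixAct_charmatrix_apply [DecidableEq ι] (f : End R V) (B : Matrix ι ι R)
    (v : ι → V) (j : ι) : polyMatrixAct f B.charmatrix v j = f (v j) - ∑ i, B i j • v i := by
  simp [charmatrix_apply, diagonal_apply, apply_ite (aeval f),
    apply_ite (DFunLike.coe : End R V → V → V), ite_apply, Finset.sum_sub_distrib]

def polyMatrixActEquiv [DecidableEq ι] (f : End R V) (U : (Matrix ι ι R[X])ˣ) :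
    (ι → V) ≃ₗ[R] (ι → V) :=
  .ofLinearMap (polyMatrixAct f U) (polyMatrixAct f ↑U⁻¹)
    (by rw [← polyMatrixAct_mul, U.inv_mul, polyMatrixAct_one])
    (by rw [← polyMatrixAct_mul, U.mul_inv, polyMatrixAct_one])

@[simp]
theorem coe_polyMatrixActEquiv [DecidableEq ι] (f : End R V) (U : (Matrix ι ι R[X])ˣ) :
    (polyMatrixActEquiv f U : (ι → V) →ₗ[R] (ι → V)) = polyMatrixAct f U :=
  rfl

theorem finrank_ker_polyMatrixAct_units_mul [DecidableEq ι] (f : End R V)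
    (U W : (Matrix ι ι R[X])ˣ) (C : Matrix ι ι R[X]) :
    finrank R (ker (polyMatrixAct f (U.val * C * W.val))) =
      finrank R (ker (polyMatrixAct f C)) := by
  refine finrank_ker_eq_of_comp_eq (polyMatrixActEquiv f W⁻¹) (polyMatrixActEquiv f U) ?_
  rw [coe_polyMatrixActEquiv, coe_polyMatrixActEquiv, ← polyMatrixAct_mul, ← polyMatrixAct_mul,
    Units.mul_inv_cancel_right]

end PolyMatrixAct

end Module.End

theorem curry_comp_kronecker_sub_mulVecLin {R m n : Type*} [CommRing R] [Fintype m] [Fintype n]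
    [DecidableEq m] [DecidableEq n] (A : Matrix m m R) (B : Matrix n n R) :
    (LinearEquiv.curry R R n m).toLinearMap ∘ₗ (1 ⊗ₖ A - Bᵀ ⊗ₖ 1 : Matrix _ _ R).mulVecLin
      = End.polyMatrixAct (toLin' A) B.charmatrix ∘ₗ (LinearEquiv.curry R R n m).toLinearMap := by
  refine LinearMap.ext fun v => funext fun j => funext fun r => ?_
  rw [LinearMap.comp_apply, LinearMap.comp_apply, LinearEquiv.coe_coe,
    End.polyMatrixAct_charmatrix_apply]
  simp [mulVec, dotProduct, Fintype.sum_prod_type, one_apply, mul_comm]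

theorem nullity_kronecker_sylvester_nonderogatory_general
    {F : Type*} [Field F] {m n : ℕ}
    (A : Matrix (Fin m) (Fin m) F) (B : Matrix (Fin n) (Fin n) F)
    (hA : minpoly F A = A.charpoly)
    (t : Fin n → F[X])
    (hW : ∃ U V : Matrix (Fin n) (Fin n) F[X], IsUnit U ∧ IsUnit V ∧
      U * B.charmatrix * V = Matrix.diagonal t) :
    Module.finrank F
        (LinearMap.ker ((1 : Matrix (Fin n) (Fin n) F) ⊗ₖ A
          - Bᵀ ⊗ₖ (1 : Matrix (Fin m) (Fin m) F)).mulVecLin)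
      = ∑ j, (EuclideanDomain.gcd A.charpoly (t j)).natDegree := by
  obtain ⟨U, V, hU, hV, hUV⟩ := hW
  have hf : minpoly F (toLin' A) = (toLin' A).charpoly := by
    rw [minpoly_toLin', charpoly_toLin', hA]
  calc finrank F (ker (1 ⊗ₖ A - Bᵀ ⊗ₖ 1 : Matrix _ _ F).mulVecLin)
      = finrank F (ker (End.polyMatrixAct (toLin' A) B.charmatrix)) :=
        finrank_ker_eq_of_comp_eq _ _ (curry_comp_kronecker_sub_mulVecLin A B)
    _ = finrank F (ker (End.polyMatrixAct (toLin' A) (diagonal t))) := by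
        rw [← hUV, ← hU.unit_spec, ← hV.unit_spec, End.finrank_ker_polyMatrixAct_units_mul]
    _ = ∑ j, finrank F (ker (aeval (toLin' A) (t j))) := by
        rw [End.polyMatrixAct_diagonal, finrank_ker_piMap]
    _ = ∑ j, (EuclideanDomain.gcd A.charpoly (t j)).natDegree := by
        refine Finset.sum_congr rfl fun j _ => ?_
        rw [← charpoly_toLin', ← End.ker_aeval_gcd _ (aeval_self_charpoly _),
          End.finrank_ker_aeval_of_dvd _ hf (hf ▸ EuclideanDomain.gcd_dvd_left _ _)]

/-- over a perfect field, if `A` is non-derogatory (its minimal polynomial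
equals its characteristic polynomial) and `t` gives the invariant factors of `xI − B`,
then the nullity of `Iₙ ⊗ A − Bᵀ ⊗ Iₘ` equals `∑ j deg (gcd (c_A, t j))`. -/
theorem nullity_kronecker_sylvester_nonderogatory
    {F : Type*} [Field F] [PerfectField F] {m n : ℕ}
    (A : Matrix (Fin m) (Fin m) F) (B : Matrix (Fin n) (Fin n) F)
    (hA : minpoly F A = A.charpoly)
    (t : Fin n → F[X]) (ht : ∀ j, (t j).Monic)
    (htd : ∀ i j : Fin n, i ≤ j → t i ∣ t j)
    (hW : ∃ U V : Matrix (Fin n) (Fin n) F[X], IsUnit U ∧ IsUnit V ∧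
      U * B.charmatrix * V = Matrix.diagonal t) :
    Module.finrank F
        (LinearMap.ker ((1 : Matrix (Fin n) (Fin n) F) ⊗ₖ A
          - Bᵀ ⊗ₖ (1 : Matrix (Fin m) (Fin m) F)).mulVecLin)
      = ∑ j, (EuclideanDomain.gcd A.charpoly (t j)).natDegree :=
  nullity_kronecker_sylvester_nonderogatory_general A B hA t hW
end
end

section
/- For odd n, m ≥ 3, the nullity over ℤ₂ of the adjacency matrix of S_n □ S_m, the Cartesian product of the star graphs on n and m vertices, equals (m − 2)(n − 2) + 2. -/
open Matrix Kronecker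
noncomputable section

/-!
Write `Fin n ≃ Option (Option (Fin (n - 2)))`: the centre is `none` and one leaf, `some none`, is
distinguished. In characteristic 2, a vector `X` on pairs of vertices lies in the
kernel of the Kronecker sum of two stars iff `X` takes a single value `c` on all centre–leaf pairs
and the leaf–leaf block has all row and column sums equal to the centre–centre value `t`; the
remaining equation holds because both stars have an even number of leaves. Such a block is
determined by `t` and its restriction to pairs of non-distinguished leaves, which is arbitrary, so
the kernel has `(n - 2)(m - 2) + 2` free coordinates.
-/

/-- The adjacency matrix over `ℤ₂` of the star graph `S_n` on `n` vertices:
vertex `0` is the center, adjacent to every other vertex. -/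
def starAdj (n : ℕ) : Matrix (Fin n) (Fin n) (ZMod 2) :=
  fun i j => if ((i : ℕ) = 0 ∧ (j : ℕ) ≠ 0) ∨ ((j : ℕ) = 0 ∧ (i : ℕ) ≠ 0) then 1 else 0

namespace Matrix

variable {R L M ι κ ι' κ' : Type*}

def kroneckerSum [Semiring R] [DecidableEq ι] [DecidableEq κ] (A : Matrix ι ι R)
    (B : Matrix κ κ R) : Matrix (ι × κ) (ι × κ) R :=
  A ⊗ₖ (1 : Matrix κ κ R) + (1 : Matrix ι ι R) ⊗ₖ B

def optionStar (R : Type*) [Zero R] [One R] (L : Type*) : Matrix (Option L) (Option L) R :=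
  of fun i j => if i.isSome = j.isSome then 0 else 1

section Semiring

variable [Semiring R]

theorem kroneckerSum_submatrix [DecidableEq ι] [DecidableEq κ] [DecidableEq ι'] [DecidableEq κ']
    (A : Matrix ι ι R) (B : Matrix κ κ R) (e : ι' ≃ ι) (f : κ' ≃ κ) :
    kroneckerSum (A.submatrix e e) (B.submatrix f f) =
      (kroneckerSum A B).submatrix (e.prodCongr f) (e.prodCongr f) := by
  rw [kroneckerSum, kroneckerSum, ← submatrix_one_equiv e, ← submatrix_one_equiv f]
  exact congrArg₂ (· + ·) (kroneckerMap_submatrix_submatrix _ _ _ _ _ _ _)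
    (kroneckerMap_submatrix_submatrix _ _ _ _ _ _ _)

theorem kroneckerSum_mulVec_apply [Fintype ι] [Fintype κ] [DecidableEq ι] [DecidableEq κ]
    (A : Matrix ι ι R) (B : Matrix κ κ R) (X : ι × κ → R) (i : ι) (j : κ) :
    (kroneckerSum A B *ᵥ X) (i, j) =
      (A *ᵥ fun k => X (k, j)) i + (B *ᵥ fun l => X (i, l)) j := by
  simp [kroneckerSum, mulVec, dotProduct, Fintype.sum_prod_type, one_apply, add_mul, ite_mul,
    Finset.sum_add_distrib]

variable [Fintype L]

@[simp]
theorem optionStar_mulVec_none (v : Option L → R) :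
    (optionStar R L *ᵥ v) none = ∑ a, v (some a) := by
  simp [optionStar, mulVec, dotProduct, Fintype.sum_option]

@[simp]
theorem optionStar_mulVec_some (v : Option L → R) (a : L) :
    (optionStar R L *ᵥ v) (some a) = v none := by
  simp [optionStar, mulVec, dotProduct, Fintype.sum_option]

theorem kroneckerSum_optionStar_mulVec_eq_zero_iff [Fintype M] [DecidableEq L] [DecidableEq M]
    (X : Option L × Option M → R) :
    kroneckerSum (optionStar R L) (optionStar R M) *ᵥ X = 0 ↔
      (∑ a, X (some a, none) + ∑ b, X (none, some b) = 0) ∧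
      (∀ a, X (none, none) + ∑ b, X (some a, some b) = 0) ∧
      (∀ b, ∑ a, X (some a, some b) + X (none, none) = 0) ∧
      (∀ a b, X (none, some b) + X (some a, none) = 0) := by
  simp only [funext_iff, Prod.forall, Option.forall, kroneckerSum_mulVec_apply,
    optionStar_mulVec_none, optionStar_mulVec_some, Pi.zero_apply, forall_and, and_assoc]

end Semiring

section CommSemiring

variable [CommSemiring R]

theorem finrank_ker_mulVecLin_submatrix [Fintype ι] [Fintype ι'] (A : Matrix ι ι R)
    (e : ι' ≃ ι) :
    Module.finrank R (LinearMap.ker (A.submatrix e e).mulVecLin) =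
      Module.finrank R (LinearMap.ker A.mulVecLin) := by
  rw [show A.submatrix e e = reindex e.symm e.symm A from rfl, mulVecLin_reindex,
    LinearEquiv.ker_comp, LinearMap.ker_comp, Submodule.comap_equiv_eq_map_symm,
    LinearEquiv.finrank_map_eq]

variable [Fintype L] [Fintype M] [DecidableEq L] [DecidableEq M]

def starKernelCoords :
    (Option (Option L) × Option (Option M) → R) →ₗ[R] R × R × (L × M → R) :=
  (LinearMap.proj (none, none)).prod <| (LinearMap.proj (none, some none)).prod <|
    LinearMap.funLeft R R fun p => (some (some p.1), some (some p.2))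

/-- In characteristic 2 the leaf block has all row and column sums equal to `t`; its entries at
the distinguished leaves `some none` are forced by the interior block `Z`. -/
def starKernelVector (t c : R) (Z : L × M → R) : Option (Option L) × Option (Option M) → R
  | (none, none) => t
  | (none, some _) => c
  | (some _, none) => c
  | (some none, some none) => ∑ p, Z p
  | (some none, some (some j)) => t + ∑ i, Z (i, j)
  | (some (some i), some none) => t + ∑ j, Z (i, j)
  | (some (some i), some (some j)) => Z (i, j)

open CharTwo in
theorem starKernelVector_mem_ker [CharP R 2] (hL : Odd (Fintype.card L))
    (hM : Odd (Fintype.card M)) (t c : R) (Z : L × M → R) :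
    kroneckerSum (optionStar R (Option L)) (optionStar R (Option M)) *ᵥ
      starKernelVector t c Z = 0 := by
  rw [kroneckerSum_optionStar_mulVec_eq_zero_iff]
  simp [starKernelVector, Option.forall, Fintype.sum_option, Finset.sum_add_distrib,
    Fintype.sum_prod_type, natCast_eq_ite, Nat.not_even_iff_odd.mpr, hL, hM]
  rw [Finset.sum_comm]
  constructor <;> ring_nf <;> simp

theorem eq_zero_of_mulVec_eq_zero_of_starKernelCoords_eq_zero
    {X : Option (Option L) × Option (Option M) → R}
    (hX : kroneckerSum (optionStar R (Option L)) (optionStar R (Option M)) *ᵥ X = 0)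
    (hcoords : starKernelCoords X = 0) : X = 0 := by
  obtain ⟨-, hrow, hcol, hleaf⟩ := (kroneckerSum_optionStar_mulVec_eq_zero_iff X).mp hX
  have ht : X (none, none) = 0 := congrArg Prod.fst hcoords
  have hc : X (none, some none) = 0 := congrArg (·.2.1) hcoords
  have hZ i j : X (some (some i), some (some j)) = 0 := congrFun (congrArg (·.2.2) hcoords) (i, j)
  have hleafRow a : X (some a, none) = 0 := by simpa [hc] using hleaf a none
  have hleafCol b : X (none, some b) = 0 := by simpa [hleafRow] using hleaf none b
  have hlastCol i : X (some (some i), some none) = 0 := by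
    simpa [Fintype.sum_option, ht, hZ] using hrow (some i)
  have hlastRow j : X (some none, some (some j)) = 0 := by
    simpa [Fintype.sum_option, ht, hZ] using hcol (some j)
  have hcorner : X (some none, some none) = 0 := by
    simpa [Fintype.sum_option, ht, hlastRow] using hrow none
  funext ⟨a, b⟩
  rcases a with _ | _ | i <;> rcases b with _ | _ | j <;> simp [*]

end CommSemiring

theorem finrank_ker_kroneckerSum_optionStar [CommRing R] [CharP R 2] [Fintype L] [Fintype M]
    [DecidableEq L] [DecidableEq M] (hL : Odd (Fintype.card L)) (hM : Odd (Fintype.card M)) :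
    Module.finrank R (LinearMap.ker
        (kroneckerSum (optionStar R (Option L)) (optionStar R (Option M))).mulVecLin) =
      Fintype.card L * Fintype.card M + 2 := by
  have : Nontrivial R := CharP.nontrivial_of_char_ne_one (v := 2) (by norm_num)
  let f := starKernelCoords ∘ₗ (LinearMap.ker
    (kroneckerSum (optionStar R (Option L)) (optionStar R (Option M))).mulVecLin).subtype
  have hinj : Function.Injective f := by
    rw [injective_iff_map_eq_zero]
    rintro ⟨X, hX⟩ hcoords
    exact Subtype.ext (eq_zero_of_mulVec_eq_zero_of_starKernelCoords_eq_zero hX hcoords)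
  have hsurj : Function.Surjective f := fun ⟨t, c, Z⟩ =>
    ⟨⟨starKernelVector t c Z, starKernelVector_mem_ker hL hM t c Z⟩, rfl⟩
  rw [(LinearEquiv.ofBijective f ⟨hinj, hsurj⟩).finrank_eq]
  simp [Module.finrank_prod]
  ring

end Matrix

theorem starAdj_eq_submatrix_optionStar {n : ℕ} {L : Type*} (e : Fin n ≃ Option L)
    (he : ∀ i, e i = none ↔ (i : ℕ) = 0) :
    starAdj n = (optionStar (ZMod 2) L).submatrix e e := by
  ext i j
  simp only [starAdj, optionStar, submatrix_apply, of_apply, ne_eq, ← he]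
  cases e i <;> cases e j <;> simp

theorem finrank_ker_kroneckerSum_starAdj {k l : ℕ} (hk : Odd k) (hl : Odd l) :
    Module.finrank (ZMod 2)
        (LinearMap.ker (kroneckerSum (starAdj (k + 2)) (starAdj (l + 2))).mulVecLin) =
      k * l + 2 := by
  have hcenter (p : ℕ) (i : Fin (p + 2)) :
      ((finSuccEquiv (p + 1)).trans (Equiv.optionCongr (finSuccEquiv p))) i = none ↔
        (i : ℕ) = 0 := by
    rw [Equiv.trans_apply, Equiv.optionCongr_apply, Option.map_eq_none_iff, finSuccEquiv_eq_none,
      Fin.ext_iff]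
    rfl
  rw [starAdj_eq_submatrix_optionStar _ (hcenter k), starAdj_eq_submatrix_optionStar _ (hcenter l),
    kroneckerSum_submatrix, finrank_ker_mulVecLin_submatrix,
    finrank_ker_kroneckerSum_optionStar (by simpa using hk) (by simpa using hl)]
  simp

/-- for odd `n, m ≥ 3`, the nullity over `ℤ₂` of the adjacency matrix
`A_{S_n} ⊗ I + I ⊗ A_{S_m}` of `S_n □ S_m` equals `(m − 2)(n − 2) + 2`. -/
theorem nullity_star_cartesian_star {n m : ℕ} (hn : 3 ≤ n) (hm : 3 ≤ m)
    (hnodd : Odd n) (hmodd : Odd m) :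
    Module.finrank (ZMod 2)
        (LinearMap.ker ((starAdj n ⊗ₖ (1 : Matrix (Fin m) (Fin m) (ZMod 2))
          + (1 : Matrix (Fin n) (Fin n) (ZMod 2)) ⊗ₖ starAdj m).mulVecLin))
      = (m - 2) * (n - 2) + 2 := by
  obtain ⟨k, rfl⟩ : ∃ k, n = k + 2 := ⟨n - 2, by omega⟩
  obtain ⟨l, rfl⟩ : ∃ l, m = l + 2 := ⟨m - 2, by omega⟩
  rw [Nat.add_sub_cancel, Nat.add_sub_cancel, mul_comm]
  exact finrank_ker_kroneckerSum_starAdj (by simpa [parity_simps] using hnodd)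
    (by simpa [parity_simps] using hmodd)
end
end

section
/- Over ℤ₂, the Lights Out! game with open neighborhood switching on the Cartesian product G □ H, with G on m vertices (adjacency matrix A) and H on n vertices (adjacency matrix B), arranging lights in an m × n array C, is solvable if and only if the Sylvester equation AX − XB = C (equivalently AX + XB = C over ℤ₂) has a solution X over ℤ₂. -/
open Matrix
noncomputable section

namespace Matrix

variable {R l n : Type*} [CommSemiring R] [Fintype l] [Fintype n] [DecidableEq l] [DecidableEq n]

theorem sum_smul_mul_single_add_single_mul (A : Matrix l l R) (B : Matrix n n R)
    (X : Matrix l n R) :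
    ∑ i, ∑ j, X i j • (A * single i j (1 : R) + single i j (1 : R) * B) = A * X + X * B := by
  have hX : ∑ i, ∑ j, X i j • single i j (1 : R) = X := by
    simpa using (matrix_eq_sum_single X).symm
  calc ∑ i, ∑ j, X i j • (A * single i j (1 : R) + single i j (1 : R) * B)
      = A * (∑ i, ∑ j, X i j • single i j (1 : R))
          + (∑ i, ∑ j, X i j • single i j (1 : R)) * B := by
        simp only [smul_add, Finset.sum_add_distrib, Matrix.mul_sum, Matrix.sum_mul,
          Matrix.mul_smul, Matrix.smul_mul]
    _ = A * X + X * B := by rw [hX]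

end Matrix

theorem lightsOut_cartesian_solvable_iff_sylvester_general {m n : ℕ}
    (A : Matrix (Fin m) (Fin m) (ZMod 2)) (B : Matrix (Fin n) (Fin n) (ZMod 2))
    (C : Matrix (Fin m) (Fin n) (ZMod 2)) :
    (∃ X : Matrix (Fin m) (Fin n) (ZMod 2),
        C + ∑ i : Fin m, ∑ j : Fin n,
          X i j • (A * Matrix.single i j (1 : ZMod 2) + Matrix.single i j (1 : ZMod 2) * B) = 0)
      ↔ (∃ X : Matrix (Fin m) (Fin n) (ZMod 2), A * X - X * B = C) := by
  refine exists_congr fun X => ?_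
  rw [sum_smul_mul_single_add_single_mul, ZModModule.sub_eq_add, add_eq_zero_iff_eq_neg,
    ZModModule.neg_eq_self]
  exact eq_comm

/-- Lights Out! with open neighborhood switching on `G □ H`. Pressing cell
`(i,j)` (with parity `X i j`) adds `A·E_{ij} + E_{ij}·B` to the configuration mod 2, where
`E_{ij}` is the standard basis matrix. The game with initial configuration `C` is solvable
(all lights off after some presses) iff the Sylvester equation `AX − XB = C`
(equivalently `AX + XB = C` over `ℤ₂`) has a solution `X`. -/
theorem lightsOut_cartesian_solvable_iff_sylvester {m n : ℕ}
    (A : Matrix (Fin m) (Fin m) (ZMod 2)) (B : Matrix (Fin n) (Fin n) (ZMod 2))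
    (hAsymm : A.IsSymm) (hAdiag : ∀ v, A v v = 0)
    (hBsymm : B.IsSymm) (hBdiag : ∀ v, B v v = 0)
    (C : Matrix (Fin m) (Fin n) (ZMod 2)) :
    (∃ X : Matrix (Fin m) (Fin n) (ZMod 2),
        C + ∑ i : Fin m, ∑ j : Fin n,
          X i j • (A * Matrix.single i j (1 : ZMod 2) + Matrix.single i j (1 : ZMod 2) * B) = 0)
      ↔ (∃ X : Matrix (Fin m) (Fin n) (ZMod 2), A * X - X * B = C) :=
  lightsOut_cartesian_solvable_iff_sylvester_general A B C
end
end
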